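/- arXiv:2107.03254 — 3 statements merged into one kernel-verified Lean document; each statement's English description precedes it below -/
import Mathlib

section
/- Let n ≥ 2 be an integer, let s ∈ (1/2, 1) and let T > 0. There exists a constant C > 0, depending only on n, s and T, such that for every h > 0 and every t ∈ (0, T] one has ∫_0^t (t − τ) / ((t − τ)^{(n+2s)/(2s)} + h^{n+2s}) dτ ≤ C · min{h^{−n−2s}, h^{−n+2s}}. -/
open MeasureTheory Set

/-!
After `u = t - τ` the integrand is `u / (u ^ p + h ^ q)` with `q = n + 2s` and
`p = q / 2s > 2`. Dropping `u ^ p` bounds the integral by `t² / 2h^q ≤ T² h^{-n-2s} / 2`.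
With `a = h^{2s}`, so that `a ^ p = h ^ q`, dropping `h ^ q` instead on `[a, ∞)` gives the
integrable tail `u ^ (1 - p)`, and both pieces are `O(a ^ (2 - p)) = O(h^{-n+2s})`.
-/

theorem setIntegral_Ioo_comp_sub_left {E : Type*} [NormedAddCommGroup E] [NormedSpace ℝ E]
    (f : ℝ → E) {t : ℝ} (ht : 0 ≤ t) :
    ∫ τ in Ioo 0 t, f (t - τ) = ∫ u in (0 : ℝ)..t, f u := by
  rw [← integral_Ioc_eq_integral_Ioo, ← intervalIntegral.integral_of_le ht,
    intervalIntegral.integral_comp_sub_left, sub_zero, sub_self]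

section RpowKernel

variable {p H : ℝ}

theorem continuousOn_div_rpow_add (hp : 0 ≤ p) (hH : 0 < H) :
    ContinuousOn (fun u : ℝ => u / (u ^ p + H)) (Ici 0) :=
  continuousOn_id.div (Real.continuous_rpow_const hp |>.add continuous_const).continuousOn
    fun _ hu => (add_pos_of_nonneg_of_pos (Real.rpow_nonneg hu p) hH).ne'

theorem intervalIntegrable_div_rpow_add (hp : 0 ≤ p) (hH : 0 < H) {a b : ℝ}
    (ha : 0 ≤ a) (hab : a ≤ b) :
    IntervalIntegrable (fun u : ℝ => u / (u ^ p + H)) volume a b :=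
  ((continuousOn_div_rpow_add hp hH).mono fun _ hu => ha.trans hu.1).intervalIntegrable_of_Icc hab

theorem integral_div_rpow_add_le_sq_div (hp : 0 ≤ p) (hH : 0 < H) {t : ℝ} (ht : 0 ≤ t) :
    ∫ u in (0 : ℝ)..t, u / (u ^ p + H) ≤ t ^ 2 / 2 / H := by
  calc ∫ u in (0 : ℝ)..t, u / (u ^ p + H)
      ≤ ∫ u in (0 : ℝ)..t, u / H := by
        refine intervalIntegral.integral_mono_on ht
          (intervalIntegrable_div_rpow_add hp hH le_rfl ht)
          ((continuous_id.div_const H).intervalIntegrable 0 t) fun u hu => ?_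
        exact div_le_div_of_nonneg_left hu.1 hH
          (le_add_of_nonneg_left (Real.rpow_nonneg hu.1 p))
    _ = t ^ 2 / 2 / H := by rw [intervalIntegral.integral_div, integral_id]; ring

theorem integral_div_rpow_add_tail_le (hp : 2 < p) (hH : 0 < H) {a t : ℝ} (ha : 0 < a)
    (hat : a ≤ t) :
    ∫ u in a..t, u / (u ^ p + H) ≤ a ^ (2 - p) / (p - 2) := by
  have hpos : ∀ u ∈ Icc a t, 0 < u := fun u hu => ha.trans_le hu.1
  calc ∫ u in a..t, u / (u ^ p + H)
      ≤ ∫ u in a..t, u ^ (1 - p) := by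
        refine intervalIntegral.integral_mono_on hat
          (intervalIntegrable_div_rpow_add (by linarith) hH ha.le hat) ?_ fun u hu => ?_
        · refine ContinuousOn.intervalIntegrable fun u hu => ?_
          rw [uIcc_of_le hat] at hu
          exact (Real.continuousAt_rpow_const u _ (.inl (hpos u hu).ne')).continuousWithinAt
        · rw [Real.rpow_sub (hpos u hu), Real.rpow_one]
          exact div_le_div_of_nonneg_left (hpos u hu).le (Real.rpow_pos_of_pos (hpos u hu) p)
            (le_add_of_nonneg_right hH.le)
    _ = (a ^ (2 - p) - t ^ (2 - p)) / (p - 2) := by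
        rw [integral_rpow (.inr ⟨by linarith, fun h0 => ?_⟩), show 1 - p + 1 = 2 - p by ring,
          ← neg_div_neg_eq, neg_sub, neg_sub]
        rw [uIcc_of_le hat] at h0
        exact (hpos 0 h0).false
    _ ≤ a ^ (2 - p) / (p - 2) :=
        div_le_div_of_nonneg_right (sub_le_self _ (Real.rpow_nonneg (ha.le.trans hat) _))
          (by linarith)

theorem integral_div_rpow_add_rpow_le (hp : 2 < p) {a t : ℝ} (ha : 0 < a) (ht : 0 ≤ t) :
    ∫ u in (0 : ℝ)..t, u / (u ^ p + a ^ p) ≤ (1 / 2 + 1 / (p - 2)) * a ^ (2 - p) := by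
  have hap : 0 < a ^ p := Real.rpow_pos_of_pos ha p
  have hhead : a ^ 2 / 2 / a ^ p = a ^ (2 - p) / 2 := by
    rw [Real.rpow_sub ha, Real.rpow_two]; ring
  have htail : 0 ≤ 1 / (p - 2) * a ^ (2 - p) :=
    mul_nonneg (one_div_nonneg.mpr (by linarith)) (Real.rpow_nonneg ha.le _)
  rcases le_or_gt t a with hta | hat
  · calc ∫ u in (0 : ℝ)..t, u / (u ^ p + a ^ p)
        ≤ t ^ 2 / 2 / a ^ p := integral_div_rpow_add_le_sq_div (by linarith) hap ht
      _ ≤ a ^ 2 / 2 / a ^ p := by gcongr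
      _ ≤ (1 / 2 + 1 / (p - 2)) * a ^ (2 - p) := by rw [hhead, add_mul]; linarith
  · rw [← intervalIntegral.integral_add_adjacent_intervals
      (intervalIntegrable_div_rpow_add (by linarith) hap le_rfl ha.le)
      (intervalIntegrable_div_rpow_add (by linarith) hap ha.le hat.le)]
    calc _ ≤ a ^ 2 / 2 / a ^ p + a ^ (2 - p) / (p - 2) :=
          add_le_add (integral_div_rpow_add_le_sq_div (by linarith) hap ha.le)
            (integral_div_rpow_add_tail_le hp hap ha hat.le)
      _ = (1 / 2 + 1 / (p - 2)) * a ^ (2 - p) := by rw [hhead]; ring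

end RpowKernel

theorem kernel_time_integral_bound_general (n : ℕ) (hn : 2 ≤ n) (s : ℝ)
    (hs : 1 / 2 < s) (hs1 : s < 1) (T : ℝ) :
    ∃ C : ℝ, 0 < C ∧ ∀ h : ℝ, 0 < h → ∀ t : ℝ, 0 < t → t ≤ T →
      (∫ τ in Set.Ioo (0 : ℝ) t,
          (t - τ) / ((t - τ) ^ (((n : ℝ) + 2 * s) / (2 * s)) + h ^ ((n : ℝ) + 2 * s)))
        ≤ C * min (h ^ (-(n : ℝ) - 2 * s)) (h ^ (-(n : ℝ) + 2 * s)) := by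
  set p : ℝ := ((n : ℝ) + 2 * s) / (2 * s)
  have h2s : 0 < 2 * s := by linarith
  have hn2 : (2 : ℝ) ≤ n := by exact_mod_cast hn
  have hp : 2 < p := by rw [lt_div_iff₀ h2s]; linarith
  have hp2 : 0 < p - 2 := by linarith
  have hsp : 2 * s * p = n + 2 * s := mul_div_cancel₀ _ h2s.ne'
  refine ⟨max (T ^ 2 / 2) (1 / 2 + 1 / (p - 2)), lt_max_of_lt_right (by positivity), ?_⟩
  intro h hh t ht htT
  have hscale : h ^ ((n : ℝ) + 2 * s) = (h ^ (2 * s)) ^ p := by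
    rw [← Real.rpow_mul hh.le, hsp]
  rw [setIntegral_Ioo_comp_sub_left (fun u => u / (u ^ p + h ^ ((n : ℝ) + 2 * s))) ht.le,
    mul_min_of_nonneg _ _ (le_max_of_le_right (by positivity))]
  refine le_min ?_ ?_
  · calc _ ≤ t ^ 2 / 2 / h ^ ((n : ℝ) + 2 * s) :=
          integral_div_rpow_add_le_sq_div (by linarith) (Real.rpow_pos_of_pos hh _) ht.le
      _ ≤ T ^ 2 / 2 * h ^ (-(n : ℝ) - 2 * s) := by
          rw [show -(n : ℝ) - 2 * s = -((n : ℝ) + 2 * s) by ring, Real.rpow_neg hh.le,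
            ← div_eq_mul_inv]
          gcongr
      _ ≤ _ := by gcongr; exact le_max_left _ _
  · calc _ ≤ (1 / 2 + 1 / (p - 2)) * (h ^ (2 * s)) ^ (2 - p) := by
          rw [hscale]; exact integral_div_rpow_add_rpow_le hp (Real.rpow_pos_of_pos hh _) ht.le
      _ = (1 / 2 + 1 / (p - 2)) * h ^ (-(n : ℝ) + 2 * s) := by
          rw [← Real.rpow_mul hh.le]; congr 2; linear_combination -hsp
      _ ≤ _ := by gcongr; exact le_max_right _ _

/-- Kernel estimate in time: for `n ≥ 2`, `s ∈ (1/2, 1)`, `T > 0`, there is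
`C > 0` (depending only on `n, s, T`) such that for every `h > 0` and
`t ∈ (0, T]`,
`∫_0^t (t−τ)/((t−τ)^{(n+2s)/(2s)} + h^{n+2s}) dτ ≤ C min{h^{−n−2s}, h^{−n+2s}}`. -/
theorem kernel_time_integral_bound (n : ℕ) (hn : 2 ≤ n) (s : ℝ)
    (hs : 1 / 2 < s) (hs1 : s < 1) (T : ℝ) (hT : 0 < T) :
    ∃ C : ℝ, 0 < C ∧ ∀ h : ℝ, 0 < h → ∀ t : ℝ, 0 < t → t ≤ T →
      (∫ τ in Set.Ioo (0 : ℝ) t,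
          (t - τ) / ((t - τ) ^ (((n : ℝ) + 2 * s) / (2 * s)) + h ^ ((n : ℝ) + 2 * s)))
        ≤ C * min (h ^ (-(n : ℝ) - 2 * s)) (h ^ (-(n : ℝ) + 2 * s)) :=
  kernel_time_integral_bound_general n hn s hs hs1 T
end

section
/- Let n ≥ 2 be an integer and let s ∈ (1/2, 1). There exists a constant C > 0, depending only on n and s, such that for all x, z ∈ ℝⁿ with 0 < ‖x − z‖ ≤ 1/2, one has ∫_{{y ∈ ℝⁿ : ‖x − y‖ ≥ 2‖x − z‖}} ‖x − z‖ · ‖x − y‖^{−2} · min{‖x − y‖^{−n−2s}, ‖x − y‖^{−n+2s}} dy ≤ C ‖x − z‖^{2s−1} (1 + |log ‖x − z‖|). -/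
/-!
Off the diagonal the minimum is at most `‖x - y‖ ^ (-n + 2s)`, so the integrand is dominated by
`h ‖x - y‖ ^ (2s - 2 - n)` with `h = ‖x - z‖`; this power is integrable at infinity because
`s < 1`. Translation and dilation invariance of Lebesgue measure show that its integral over
`{‖x - y‖ ≥ 2h}` is `(2h) ^ (2s - 2)` times a constant depending only on `n` and `s`, which
gives the bound `C h ^ (2s - 1)` even without the logarithmic factor.
-/

open MeasureTheory Set Module Pointwise

section RadialPower

variable {E : Type*} [NormedAddCommGroup E] [NormedSpace ℝ E] [FiniteDimensional ℝ E]
  [MeasurableSpace E] [BorelSpace E] (μ : Measure E) [μ.IsAddHaarMeasure]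

theorem integrableOn_norm_rpow_setOf_le_norm {p : ℝ} (hp : p < -(finrank ℝ E : ℝ)) {c : ℝ}
    (hc : 0 < c) : IntegrableOn (fun v : E ↦ ‖v‖ ^ p) {v | c ≤ ‖v‖} μ := by
  have hp0 : p < 0 := hp.trans_le (by simp)
  have hbound : Integrable (fun v : E ↦ (1 + c⁻¹) ^ (-p) * (1 + ‖v‖) ^ (-(-p))) μ :=
    (integrable_one_add_norm (by linarith)).const_mul _
  refine hbound.restrict.mono' (measurable_norm.pow_const p).aestronglyMeasurable ?_
  filter_upwards [ae_restrict_mem (isClosed_le continuous_const continuous_norm).measurableSet]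
    with v (hv : c ≤ ‖v‖)
  have hle : (1 + ‖v‖) / (1 + c⁻¹) ≤ ‖v‖ := by
    rw [div_le_iff₀ (by positivity), mul_add, mul_one, add_comm]
    gcongr
    exact (one_le_div hc).2 hv
  rw [neg_neg, Real.norm_of_nonneg (by positivity), Real.rpow_neg (by positivity), mul_comm,
    ← div_eq_mul_inv, ← Real.div_rpow (by positivity) (by positivity)]
  exact Real.rpow_le_rpow_of_nonpos (by positivity) hle hp0.le

theorem setIntegral_norm_rpow_setOf_le_norm (p : ℝ) {c : ℝ} (hc : 0 < c) :
    ∫ v in {v : E | c ≤ ‖v‖}, ‖v‖ ^ p ∂μ =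
      c ^ ((finrank ℝ E : ℝ) + p) * ∫ v in {v : E | 1 ≤ ‖v‖}, ‖v‖ ^ p ∂μ := by
  have hset : c • {v : E | 1 ≤ ‖v‖} = {v | c ≤ ‖v‖} := by
    ext v
    simp [mem_smul_set_iff_inv_smul_mem₀ hc.ne', norm_smul, abs_of_pos hc, le_inv_mul_iff₀ hc]
  have hscale := Measure.setIntegral_comp_smul_of_pos μ (fun v : E ↦ ‖v‖ ^ p) {v | 1 ≤ ‖v‖} hc
  simp only [norm_smul, Real.norm_of_nonneg hc.le, hset, smul_eq_mul,
    Real.mul_rpow hc.le (norm_nonneg _), integral_const_mul] at hscale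
  rw [Real.rpow_add hc, Real.rpow_natCast, mul_assoc, hscale]
  field_simp

theorem integrableOn_norm_sub_rpow_setOf_le_norm_sub (x : E) {p : ℝ}
    (hp : p < -(finrank ℝ E : ℝ)) {c : ℝ} (hc : 0 < c) :
    IntegrableOn (fun y : E ↦ ‖x - y‖ ^ p) {y | c ≤ ‖x - y‖} μ := by
  simp_rw [norm_sub_rev x]
  exact ((measurePreserving_sub_right μ x).integrableOn_comp_preimage
    (measurableEmbedding_subRight x)).2 (integrableOn_norm_rpow_setOf_le_norm μ hp hc)

theorem setIntegral_norm_sub_rpow_setOf_le_norm_sub (x : E) (p : ℝ) {c : ℝ} (hc : 0 < c) :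
    ∫ y in {y : E | c ≤ ‖x - y‖}, ‖x - y‖ ^ p ∂μ =
      c ^ ((finrank ℝ E : ℝ) + p) * ∫ v in {v : E | 1 ≤ ‖v‖}, ‖v‖ ^ p ∂μ := by
  simp_rw [norm_sub_rev x]
  exact ((measurePreserving_sub_right μ x).setIntegral_preimage_emb
    (measurableEmbedding_subRight x) (fun v ↦ ‖v‖ ^ p) {v | c ≤ ‖v‖}).trans
    (setIntegral_norm_rpow_setOf_le_norm μ p hc)

theorem setIntegral_le_of_le_norm_sub_rpow (x : E) {p : ℝ} (hp : p < -(finrank ℝ E : ℝ))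
    {c : ℝ} (hc : 0 < c) {f : E → ℝ} (hf_nonneg : ∀ y, c ≤ ‖x - y‖ → 0 ≤ f y)
    (hf_le : ∀ y, c ≤ ‖x - y‖ → f y ≤ ‖x - y‖ ^ p) :
    ∫ y in {y : E | c ≤ ‖x - y‖}, f y ∂μ ≤
      c ^ ((finrank ℝ E : ℝ) + p) * ∫ v in {v : E | 1 ≤ ‖v‖}, ‖v‖ ^ p ∂μ := by
  have hS : MeasurableSet {y : E | c ≤ ‖x - y‖} :=
    (isClosed_le continuous_const (continuous_const.sub continuous_id).norm).measurableSet
  rw [← setIntegral_norm_sub_rpow_setOf_le_norm_sub μ x p hc]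
  exact integral_mono_of_nonneg ((ae_restrict_iff' hS).2 (ae_of_all _ hf_nonneg))
    (integrableOn_norm_sub_rpow_setOf_le_norm_sub μ x hp hc)
    ((ae_restrict_iff' hS).2 (ae_of_all _ hf_le))

end RadialPower

theorem Real.rpow_neg_two_mul_min_le {r : ℝ} (hr : 0 < r) (a b : ℝ) :
    r ^ (-2 : ℝ) * min (r ^ a) (r ^ b) ≤ r ^ (b - 2) := by
  rw [sub_eq_neg_add, Real.rpow_add hr]
  exact mul_le_mul_of_nonneg_left (min_le_right _ _) (by positivity)

theorem gradient_kernel_difference_bound_general (n : ℕ) (s : ℝ) (hs1 : s < 1) :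
    ∃ C : ℝ, 0 < C ∧ ∀ x z : EuclideanSpace ℝ (Fin n),
      0 < ‖x - z‖ → ‖x - z‖ ≤ 1 / 2 →
      (∫ y in {y : EuclideanSpace ℝ (Fin n) | 2 * ‖x - z‖ ≤ ‖x - y‖},
          ‖x - z‖ * ‖x - y‖ ^ (-2 : ℝ) *
            min (‖x - y‖ ^ (-(n : ℝ) - 2 * s)) (‖x - y‖ ^ (-(n : ℝ) + 2 * s)))
        ≤ C * ‖x - z‖ ^ (2 * s - 1) * (1 + |Real.log ‖x - z‖|) := by
  set p : ℝ := -(n : ℝ) + 2 * s - 2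
  set K := ∫ v in {v : EuclideanSpace ℝ (Fin n) | 1 ≤ ‖v‖}, ‖v‖ ^ p
  have hK : 0 ≤ K := setIntegral_nonneg_of_ae_restrict (ae_of_all _ fun v ↦ by positivity)
  have hp : p < -(finrank ℝ (EuclideanSpace ℝ (Fin n)) : ℝ) := by
    rw [finrank_euclideanSpace_fin]; linarith
  refine ⟨2 ^ (2 * s - 2) * K + 1, by positivity, fun x z hxz _ ↦ ?_⟩
  set h := ‖x - z‖
  simp_rw [mul_assoc h, integral_const_mul]
  calc h * ∫ y in {y | 2 * h ≤ ‖x - y‖},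
          ‖x - y‖ ^ (-2 : ℝ) * min (‖x - y‖ ^ (-(n : ℝ) - 2 * s)) (‖x - y‖ ^ (-(n : ℝ) + 2 * s))
      ≤ h * ((2 * h) ^ ((n : ℝ) + p) * K) := by
        gcongr
        have hbound := setIntegral_le_of_le_norm_sub_rpow volume x hp (c := 2 * h) (by linarith)
          (fun y _ ↦ mul_nonneg (by positivity) (le_min (by positivity) (by positivity)))
          fun y hy ↦ Real.rpow_neg_two_mul_min_le (by linarith) (-(n : ℝ) - 2 * s) _
        rwa [finrank_euclideanSpace_fin] at hbound
    _ = 2 ^ (2 * s - 2) * K * h ^ (2 * s - 1) := by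
        rw [show (n : ℝ) + p = 2 * s - 2 by ring, Real.mul_rpow zero_le_two hxz.le,
          show 2 * s - 1 = 1 + (2 * s - 2) by ring, Real.rpow_add hxz 1, Real.rpow_one]
        ring
    _ ≤ (2 ^ (2 * s - 2) * K + 1) * h ^ (2 * s - 1) * (1 + |Real.log h|) := by
        grw [← le_add_of_nonneg_right (abs_nonneg (Real.log h)), mul_one, ← le_add_of_nonneg_right
          zero_le_one]

/-- For `n ≥ 2`, `s ∈ (1/2, 1)`, there is `C > 0` (depending only on `n, s`)
such that for all `x, z ∈ ℝⁿ` with `0 < ‖x − z‖ ≤ 1/2`,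
`∫_{‖x−y‖ ≥ 2‖x−z‖} ‖x−z‖ ‖x−y‖^{−2} min{‖x−y‖^{−n−2s}, ‖x−y‖^{−n+2s}} dy
  ≤ C ‖x−z‖^{2s−1} (1 + |log ‖x−z‖|)`. -/
theorem gradient_kernel_difference_bound (n : ℕ) (hn : 2 ≤ n) (s : ℝ)
    (hs : 1 / 2 < s) (hs1 : s < 1) :
    ∃ C : ℝ, 0 < C ∧ ∀ x z : EuclideanSpace ℝ (Fin n),
      0 < ‖x - z‖ → ‖x - z‖ ≤ 1 / 2 →
      (∫ y in {y : EuclideanSpace ℝ (Fin n) | 2 * ‖x - z‖ ≤ ‖x - y‖},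
          ‖x - z‖ * ‖x - y‖ ^ (-2 : ℝ) *
            min (‖x - y‖ ^ (-(n : ℝ) - 2 * s)) (‖x - y‖ ^ (-(n : ℝ) + 2 * s)))
        ≤ C * ‖x - z‖ ^ (2 * s - 1) * (1 + |Real.log ‖x - z‖|) :=
  gradient_kernel_difference_bound_general n s hs1
end

section
/- Let s ∈ (0, 1) and set a = 1 − 2s. Define H : ℝ × (0, ∞) → ℝ by H(x, y) = (√(x² + y²) − x)^{1−s}. Then for all x ∈ ℝ and y > 0 one has ∂²_x H(x,y) + ∂²_y H(x,y) − (a/y) ∂_y H(x,y) = 0; equivalently, L_{−a} H = 0 on the upper half-plane. -/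
open MeasureTheory

/-- `H(x,y) = (√(x² + y²) − x)^{1−s}`. -/
noncomputable def H (s x y : ℝ) : ℝ := (Real.sqrt (x ^ 2 + y ^ 2) - x) ^ (1 - s)

/-!
Write `r = √(x² + y²)`, `g = r − x` and `p = 1 − s`, so that `H = g ^ p` with `g > 0` for `y > 0`.
The chain rule gives
`Δ(g ^ p) − (a/y) ∂_y(g ^ p) = p g^(p-2) ((p − 1)|∇g|² + g Δg − (a/y) g ∂_y g)`,
and for this `g` one has `|∇g|² = 2g/r`, `Δg = 1/r` and `∂_y g / y = 1/r`. The bracket is therefore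
`(g/r)(2p − 1 − a)`, which vanishes exactly when `a = 1 − 2s`.
-/

open Filter Topology

theorem lt_sqrt_sq_add (x : ℝ) {c : ℝ} (hc : 0 < c) : x < √(x ^ 2 + c) :=
  (le_abs_self x).trans_lt <| (Real.lt_sqrt (abs_nonneg x)).2 (by rw [sq_abs]; linarith)

theorem hasDerivAt_sqrt_sq_add {c t : ℝ} (h : t ^ 2 + c ≠ 0) :
    HasDerivAt (fun u => √(u ^ 2 + c)) (t / √(t ^ 2 + c)) t := by
  convert ((hasDerivAt_pow 2 t).add_const c).sqrt h using 1
  field_simp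
  ring

theorem hasDerivAt_div_sqrt_sq_add {c t : ℝ} (h : 0 < t ^ 2 + c) :
    HasDerivAt (fun u => u / √(u ^ 2 + c)) (c / √(t ^ 2 + c) ^ 3) t := by
  have hr : √(t ^ 2 + c) ≠ 0 := (Real.sqrt_pos.2 h).ne'
  refine ((hasDerivAt_id' t).fun_div (hasDerivAt_sqrt_sq_add h.ne') hr).congr_deriv ?_
  field_simp
  rw [Real.sq_sqrt h.le]
  ring

theorem deriv_deriv_rpow_const {f f' : ℝ → ℝ} {f'' x : ℝ} (p : ℝ)
    (hf : ∀ᶠ t in 𝓝 x, HasDerivAt f (f' t) t) (hf' : HasDerivAt f' f'' x) (hx : f x ≠ 0) :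
    deriv (deriv fun t => f t ^ p) x =
      p * ((p - 1) * f x ^ (p - 2) * f' x ^ 2 + f x ^ (p - 1) * f'') := by
  have hne : ∀ᶠ t in 𝓝 x, f t ≠ 0 := hf.self_of_nhds.continuousAt.eventually_ne hx
  have hderiv : deriv (fun t => f t ^ p) =ᶠ[𝓝 x] fun t => f' t * p * f t ^ (p - 1) := by
    filter_upwards [hf, hne] with t hft hne
    exact (hft.rpow_const (Or.inl hne)).deriv
  have hprod : HasDerivAt (fun t => f' t * p * f t ^ (p - 1))
      (f'' * p * f x ^ (p - 1) + f' x * p * (f' x * (p - 1) * f x ^ (p - 1 - 1))) x :=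
    (hf'.mul_const p).mul (hf.self_of_nhds.rpow_const (Or.inl hx))
  rw [hderiv.deriv_eq, hprod.deriv, show p - 1 - 1 = p - 2 by ring]
  ring

theorem deriv_deriv_H_fst (s : ℝ) {y : ℝ} (hy : y ≠ 0) (x : ℝ) :
    deriv (deriv fun t => H s t y) x =
      (1 - s) * ((1 - s - 1) * (√(x ^ 2 + y ^ 2) - x) ^ (1 - s - 2) * (x / √(x ^ 2 + y ^ 2) - 1) ^ 2
        + (√(x ^ 2 + y ^ 2) - x) ^ (1 - s - 1) * (y ^ 2 / √(x ^ 2 + y ^ 2) ^ 3)) :=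
  deriv_deriv_rpow_const (f' := fun t => t / √(t ^ 2 + y ^ 2) - 1) (1 - s)
    (Eventually.of_forall fun t => (hasDerivAt_sqrt_sq_add (by positivity)).sub (hasDerivAt_id t))
    ((hasDerivAt_div_sqrt_sq_add (by positivity)).sub_const 1)
    (sub_pos.2 (lt_sqrt_sq_add x (by positivity))).ne'

theorem H_snd_eq (s x : ℝ) : (fun t => H s x t) = fun t => (√(t ^ 2 + x ^ 2) - x) ^ (1 - s) := by
  funext t
  rw [H, add_comm]

theorem deriv_H_snd (s x : ℝ) {y : ℝ} (hy : y ≠ 0) :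
    deriv (fun t => H s x t) y =
      y / √(x ^ 2 + y ^ 2) * (1 - s) * (√(x ^ 2 + y ^ 2) - x) ^ (1 - s - 1) := by
  have hg := (sub_pos.2 (lt_sqrt_sq_add x (c := y ^ 2) (by positivity))).ne'
  rw [add_comm (x ^ 2)] at hg ⊢
  rw [H_snd_eq]
  exact (((hasDerivAt_sqrt_sq_add (by positivity)).sub_const x).rpow_const (Or.inl hg)).deriv

theorem deriv_deriv_H_snd (s x : ℝ) {y : ℝ} (hy : y ≠ 0) :
    deriv (deriv fun t => H s x t) y =
      (1 - s) * ((1 - s - 1) * (√(x ^ 2 + y ^ 2) - x) ^ (1 - s - 2) * (y / √(x ^ 2 + y ^ 2)) ^ 2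
        + (√(x ^ 2 + y ^ 2) - x) ^ (1 - s - 1) * (x ^ 2 / √(x ^ 2 + y ^ 2) ^ 3)) := by
  have hg := (sub_pos.2 (lt_sqrt_sq_add x (c := y ^ 2) (by positivity))).ne'
  rw [add_comm (x ^ 2)] at hg ⊢
  rw [H_snd_eq]
  exact deriv_deriv_rpow_const (f' := fun t => t / √(t ^ 2 + x ^ 2)) (1 - s)
    ((eventually_ne_nhds hy).mono fun t ht => (hasDerivAt_sqrt_sq_add (by positivity)).sub_const x)
    (hasDerivAt_div_sqrt_sq_add (by positivity)) hg

theorem La_formula_eq_zero {s a x y r : ℝ} (ha : a = 1 - 2 * s) (hy : y ≠ 0)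
    (hr : 0 < r) (hr2 : r ^ 2 = x ^ 2 + y ^ 2) (hg : 0 < r - x) :
    (1 - s) * ((1 - s - 1) * (r - x) ^ (1 - s - 2) * (x / r - 1) ^ 2
        + (r - x) ^ (1 - s - 1) * (y ^ 2 / r ^ 3))
      + (1 - s) * ((1 - s - 1) * (r - x) ^ (1 - s - 2) * (y / r) ^ 2
        + (r - x) ^ (1 - s - 1) * (x ^ 2 / r ^ 3))
      - a / y * (y / r * (1 - s) * (r - x) ^ (1 - s - 1)) = 0 := by
  have hgrad : (x / r - 1) ^ 2 + (y / r) ^ 2 = 2 * (r - x) / r := by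
    field_simp
    linear_combination -hr2
  have hlap : y ^ 2 / r ^ 3 + x ^ 2 / r ^ 3 = 1 / r := by
    field_simp
    linear_combination -hr2
  have hpow : (r - x) ^ (1 - s - 1) = (r - x) ^ (1 - s - 2) * (r - x) := by
    rw [← Real.rpow_add_one hg.ne']
    ring_nf
  calc _ = (1 - s) * (r - x) ^ (1 - s - 2) * (-s * ((x / r - 1) ^ 2 + (y / r) ^ 2)
        + (r - x) * (y ^ 2 / r ^ 3 + x ^ 2 / r ^ 3) - a * (r - x) / r) := by
        rw [hpow]
        field_simp
        ring
    _ = 0 := by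
        rw [hgrad, hlap, ha]
        ring

theorem H_La_harmonic_general (s : ℝ) (a : ℝ)
    (ha : a = 1 - 2 * s) :
    ∀ x y : ℝ, 0 < y →
      deriv (deriv (fun t : ℝ => H s t y)) x + deriv (deriv (fun t : ℝ => H s x t)) y
        - (a / y) * deriv (fun t : ℝ => H s x t) y = 0 := by
  intro x y hy
  have hpos : 0 < x ^ 2 + y ^ 2 := by positivity
  rw [deriv_deriv_H_fst s hy.ne', deriv_deriv_H_snd s x hy.ne', deriv_H_snd s x hy.ne']
  exact La_formula_eq_zero ha hy.ne' (Real.sqrt_pos.2 hpos) (Real.sq_sqrt hpos.le)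
    (sub_pos.2 (lt_sqrt_sq_add x (by positivity)))

/-- For `s ∈ (0,1)` and `a = 1 − 2s`, the function
`H(x,y) = (√(x²+y²) − x)^{1−s}` satisfies
`∂²ₓH + ∂²_yH − (a/y) ∂_yH = 0` on the upper half-plane, i.e. `L₋ₐ H = 0`. -/
theorem H_La_harmonic (s : ℝ) (hs : 0 < s) (hs1 : s < 1) (a : ℝ)
    (ha : a = 1 - 2 * s) :
    ∀ x y : ℝ, 0 < y →
      deriv (deriv (fun t : ℝ => H s t y)) x + deriv (deriv (fun t : ℝ => H s x t)) y
        - (a / y) * deriv (fun t : ℝ => H s x t) y = 0 :=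
  H_La_harmonic_general s a ha
end
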